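/- Let w ~ N(0, I_ℓ), ε ~ N(0, σ²I_n) independent, and Φ an n×ℓ matrix with σ² > 0. Then w + Φᵀ(ΦΦᵀ + σ²I)^{-1}(y − Φw − ε) is Gaussian with mean (ΦᵀΦ + σ²I)^{-1}Φᵀ y and covariance σ²(ΦᵀΦ + σ²I)^{-1}. -/

import Mathlib

/-!
With `A = ΦᵀΦ + σ²I`, the push-through identity gives `K := Φᵀ(ΦΦᵀ + σ²I)⁻¹ = A⁻¹Φᵀ`, and the
update is the affine image `(I − KΦ)w − Kε + Ky` of the independent Gaussian pair `(w, ε)`.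
Hence it is Gaussian with mean `Ky` and covariance `(I − KΦ)(I − KΦ)ᵀ + σ²KKᵀ`; since
`I − KΦ = σ²A⁻¹`, this equals `σ²A⁻¹(σ²I + ΦᵀΦ)A⁻¹ = σ²A⁻¹`.
-/

open MeasureTheory ProbabilityTheory Matrix

/-- A random vector `X` on a probability space is Gaussian with mean `μ` and covariance
matrix `S` iff every linear functional of `X` is a real Gaussian with the induced moments. -/
def IsGaussianVec {Ω : Type*} [MeasureSpace Ω] {p : ℕ}
    (X : Ω → Fin p → ℝ) (μ : Fin p → ℝ) (S : Matrix (Fin p) (Fin p) ℝ) : Prop :=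
  ∀ a : Fin p → ℝ,
    Measure.map (fun ω => a ⬝ᵥ X ω) (ℙ : Measure Ω)
      = gaussianReal (a ⬝ᵥ μ) (a ⬝ᵥ S.mulVec a).toNNReal

namespace IsGaussianVec

variable {Ω : Type*} [MeasureSpace Ω] {p q : ℕ} {X : Ω → Fin p → ℝ} {μ : Fin p → ℝ}
  {S : Matrix (Fin p) (Fin p) ℝ}

lemma hasLaw_dotProduct (hX : IsGaussianVec X μ S) (a : Fin p → ℝ) :
    HasLaw (fun ω => a ⬝ᵥ X ω) (gaussianReal (a ⬝ᵥ μ) (a ⬝ᵥ S *ᵥ a).toNNReal) ℙ :=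
  ⟨AEMeasurable.of_map_ne_zero (by simp [hX a, NeZero.ne]), hX a⟩

lemma mulVec (hX : IsGaussianVec X μ S) (P : Matrix (Fin q) (Fin p) ℝ) :
    IsGaussianVec (fun ω => P *ᵥ X ω) (P *ᵥ μ) (P * S * Pᵀ) := by
  intro a
  simpa only [dotProduct_mulVec, ← mulVec_mulVec, mulVec_transpose] using hX (a ᵥ* P)

lemma add_const (hX : IsGaussianVec X μ S) (b : Fin p → ℝ) :
    IsGaussianVec (fun ω => X ω + b) (μ + b) S := by
  intro a
  simpa only [dotProduct_add] using (gaussianReal_add_const (hX.hasLaw_dotProduct a) _).map_eq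

lemma add_of_indepFun {Y : Ω → Fin p → ℝ} {ν : Fin p → ℝ} {T : Matrix (Fin p) (Fin p) ℝ}
    (hX : IsGaussianVec X μ S) (hY : IsGaussianVec Y ν T) (hS : S.PosSemidef)
    (hT : T.PosSemidef) (hXY : IndepFun X Y ℙ) :
    IsGaussianVec (fun ω => X ω + Y ω) (μ + ν) (S + T) := by
  intro a
  have hSa : 0 ≤ a ⬝ᵥ S *ᵥ a := by simpa using hS.dotProduct_mulVec_nonneg a
  have hTa : 0 ≤ a ⬝ᵥ T *ᵥ a := by simpa using hT.dotProduct_mulVec_nonneg a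
  have hmeas : Measurable fun x : Fin p → ℝ => a ⬝ᵥ x := by fun_prop
  simp only [dotProduct_add, add_mulVec, Real.toNNReal_add hSa hTa]
  exact gaussianReal_add_gaussianReal_of_indepFun (hXY.comp hmeas hmeas) (hX a) (hY a)

end IsGaussianVec

section RegularizedGram

variable {m n : Type*} [Fintype m] [Fintype n] [DecidableEq n]
  (Φ : Matrix m n ℝ) {σ : ℝ}

lemma posDef_transpose_mul_self_add_smul_one (hσ : 0 < σ) : (Φᵀ * Φ + σ • 1).PosDef :=
  PosDef.posSemidef_add (posSemidef_conjTranspose_mul_self Φ) (PosDef.one.smul hσ)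

lemma transpose_mul_inv_eq_inv_mul_transpose [DecidableEq m] (hσ : 0 < σ) :
    Φᵀ * (Φ * Φᵀ + σ • 1)⁻¹ = (Φᵀ * Φ + σ • 1)⁻¹ * Φᵀ := by
  have hA := (posDef_transpose_mul_self_add_smul_one Φ hσ).isUnit
  have hB := (posDef_transpose_mul_self_add_smul_one Φᵀ hσ).isUnit
  rw [transpose_transpose] at hB
  have hpush : (Φᵀ * Φ + σ • 1) * Φᵀ = Φᵀ * (Φ * Φᵀ + σ • 1) := by
    simp only [Matrix.add_mul, Matrix.mul_add, Matrix.mul_assoc, smul_mul, Matrix.mul_smul,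
      Matrix.one_mul, Matrix.mul_one]
  calc Φᵀ * (Φ * Φᵀ + σ • 1)⁻¹
      = (Φᵀ * Φ + σ • 1)⁻¹ * ((Φᵀ * Φ + σ • 1) * Φᵀ) * (Φ * Φᵀ + σ • 1)⁻¹ := by
        rw [← Matrix.mul_assoc, nonsing_inv_mul _ ((isUnit_iff_isUnit_det _).mp hA), Matrix.one_mul]
    _ = (Φᵀ * Φ + σ • 1)⁻¹ * Φᵀ := by
        rw [hpush, Matrix.mul_assoc, Matrix.mul_assoc,
          mul_nonsing_inv _ ((isUnit_iff_isUnit_det _).mp hB), Matrix.mul_one]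

lemma one_sub_inv_mul_transpose_mul (hσ : 0 < σ) :
    1 - (Φᵀ * Φ + σ • 1)⁻¹ * Φᵀ * Φ = σ • (Φᵀ * Φ + σ • 1)⁻¹ := by
  have hA := (posDef_transpose_mul_self_add_smul_one Φ hσ).isUnit
  have h := nonsing_inv_mul _ ((isUnit_iff_isUnit_det _).mp hA)
  rw [Matrix.mul_add, Matrix.mul_smul, Matrix.mul_one] at h
  rw [sub_eq_iff_eq_add', Matrix.mul_assoc, h]

/-- The Joseph form of the Kalman covariance update, with prior `1` and noise `σ • 1`. -/
lemma joseph_form (hσ : 0 < σ) :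
    (1 - (Φᵀ * Φ + σ • 1)⁻¹ * Φᵀ * Φ) * (1 - (Φᵀ * Φ + σ • 1)⁻¹ * Φᵀ * Φ)ᵀ
      + σ • ((Φᵀ * Φ + σ • 1)⁻¹ * Φᵀ * ((Φᵀ * Φ + σ • 1)⁻¹ * Φᵀ)ᵀ)
      = σ • (Φᵀ * Φ + σ • 1)⁻¹ := by
  set A := Φᵀ * Φ + σ • (1 : Matrix n n ℝ)
  have hA := posDef_transpose_mul_self_add_smul_one Φ hσ
  have hAinv : (A⁻¹)ᵀ = A⁻¹ := by
    rw [transpose_nonsing_inv]; congr 1; exact hA.isHermitian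
  have hAA : A⁻¹ * A * A⁻¹ = A⁻¹ := by
    rw [nonsing_inv_mul _ ((isUnit_iff_isUnit_det _).mp hA.isUnit), Matrix.one_mul]
  rw [one_sub_inv_mul_transpose_mul Φ hσ]
  calc σ • A⁻¹ * (σ • A⁻¹)ᵀ + σ • (A⁻¹ * Φᵀ * (A⁻¹ * Φᵀ)ᵀ)
      = σ • (A⁻¹ * (Φᵀ * Φ + σ • 1) * A⁻¹) := by
        simp only [transpose_smul, transpose_mul, transpose_transpose, hAinv,
          Matrix.mul_add, Matrix.add_mul, smul_mul, Matrix.mul_smul, Matrix.mul_one,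
          Matrix.mul_assoc, smul_add, smul_smul]
        abel
    _ = σ • A⁻¹ := by rw [hAA]

end RegularizedGram

theorem weight_space_pathwise_update_general {Ω : Type*} [MeasureSpace Ω] {n ℓ : ℕ}
    (w : Ω → Fin ℓ → ℝ) (ε : Ω → Fin n → ℝ)
    (Φ : Matrix (Fin n) (Fin ℓ) ℝ) (σ2 : ℝ) (hσ : 0 < σ2)
    (hw : IsGaussianVec w 0 (1 : Matrix (Fin ℓ) (Fin ℓ) ℝ))
    (hε : IsGaussianVec ε 0 (σ2 • (1 : Matrix (Fin n) (Fin n) ℝ)))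
    (hindep : IndepFun w ε (ℙ : Measure Ω))
    (y : Fin n → ℝ) :
    IsGaussianVec
      (fun ω => w ω
        + (Φᵀ * (Φ * Φᵀ + σ2 • (1 : Matrix (Fin n) (Fin n) ℝ))⁻¹).mulVec
            (y - Φ.mulVec (w ω) - ε ω))
      (((Φᵀ * Φ + σ2 • (1 : Matrix (Fin ℓ) (Fin ℓ) ℝ))⁻¹ * Φᵀ).mulVec y)
      (σ2 • (Φᵀ * Φ + σ2 • (1 : Matrix (Fin ℓ) (Fin ℓ) ℝ))⁻¹) := by
  rw [transpose_mul_inv_eq_inv_mul_transpose Φ hσ]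
  set K := (Φᵀ * Φ + σ2 • (1 : Matrix (Fin ℓ) (Fin ℓ) ℝ))⁻¹ * Φᵀ
  have hupdate : (fun ω => w ω + K *ᵥ (y - Φ *ᵥ w ω - ε ω))
      = fun ω => ((1 - K * Φ) *ᵥ w ω + (-K) *ᵥ ε ω) + K *ᵥ y := by
    funext ω
    simp only [mulVec_sub, sub_mulVec, one_mulVec, neg_mulVec, mulVec_mulVec]
    abel
  have hindepK : IndepFun (fun ω => (1 - K * Φ) *ᵥ w ω) (fun ω => -K *ᵥ ε ω) ℙ :=
    hindep.comp (φ := ((1 - K * Φ) *ᵥ ·)) (ψ := (-K *ᵥ ·)) (by fun_prop) (by fun_prop)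
  have hsum := ((hw.mulVec (1 - K * Φ)).add_of_indepFun (hε.mulVec (-K))
    (PosSemidef.one.mul_mul_conjTranspose_same _)
    ((PosDef.one.smul hσ).posSemidef.mul_mul_conjTranspose_same _) hindepK).add_const (K *ᵥ y)
  rw [hupdate]
  convert hsum using 1
  · simp
  · rw [← joseph_form Φ hσ]
    simp only [Matrix.mul_one, Matrix.neg_mul, Matrix.mul_neg, transpose_neg, neg_neg,
      Matrix.mul_smul, smul_mul, smul_neg]
    rfl

/-- **Weight-space pathwise update.** If `w ~ N(0, I_ℓ)` and `ε ~ N(0, σ²I_n)` are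
independent and `Φ` is an `n × ℓ` matrix with `σ² > 0`, then
`w + Φᵀ (ΦΦᵀ + σ²I)⁻¹ (y − Φw − ε)` is Gaussian with mean `(ΦᵀΦ + σ²I)⁻¹ Φᵀ y`
and covariance `σ² (ΦᵀΦ + σ²I)⁻¹`. -/
theorem weight_space_pathwise_update {Ω : Type*} [MeasureSpace Ω]
    [IsProbabilityMeasure (ℙ : Measure Ω)] {n ℓ : ℕ}
    (w : Ω → Fin ℓ → ℝ) (ε : Ω → Fin n → ℝ)
    (Φ : Matrix (Fin n) (Fin ℓ) ℝ) (σ2 : ℝ) (hσ : 0 < σ2)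
    (hw : IsGaussianVec w 0 (1 : Matrix (Fin ℓ) (Fin ℓ) ℝ))
    (hε : IsGaussianVec ε 0 (σ2 • (1 : Matrix (Fin n) (Fin n) ℝ)))
    (hindep : IndepFun w ε (ℙ : Measure Ω))
    (y : Fin n → ℝ) :
    IsGaussianVec
      (fun ω => w ω
        + (Φᵀ * (Φ * Φᵀ + σ2 • (1 : Matrix (Fin n) (Fin n) ℝ))⁻¹).mulVec
            (y - Φ.mulVec (w ω) - ε ω))
      (((Φᵀ * Φ + σ2 • (1 : Matrix (Fin ℓ) (Fin ℓ) ℝ))⁻¹ * Φᵀ).mulVec y)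
      (σ2 • (Φᵀ * Φ + σ2 • (1 : Matrix (Fin ℓ) (Fin ℓ) ℝ))⁻¹) :=
  weight_space_pathwise_update_general w ε Φ σ2 hσ hw hε hindep y
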